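/- arXiv:1801.07969 — 5 statements merged into one kernel-verified Lean document; each statement's English description precedes it below -/
import Mathlib

section
/- Let n ≥ 7 and let y₁, y₂, y₃, y₄ : [0,1] → ℝ be C² functions, smooth on (0,1), satisfying on (0,1) the equation y₁'' - x⁻¹(1+3x²)(1-x²)⁻¹ y₁' + (1/(2n²))[n(y₁')² + ((n-1)y₂'-y₃'-y₄')² + (-y₂'+(n-1)y₃'-y₄')² + (-y₂'-y₃'+(n-1)y₄')² + (n-3)(y₂'+y₃'+y₄')²] = 0, with y₁ real-analytic on (0,1), y₁'(0)=y₁'(1)=0 and y₁(0) < y₁(1). Then y₁'(x) > 0 for all x ∈ (0,1). -/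
/-!
Multiplying the equation by the integrating factor `w(x) = (1 - x²)² / x` turns it into
`(w y₁')' = -w Q` with `Q ≥ 0` (this needs `n ≥ 3`), so `w y₁'` is antitone on `(0,1)`. Since
`w(1) = 0` and `y₁'` is continuous up to `1`, it tends to `0` at `1`, hence `y₁' ≥ 0`. If
`y₁'(x) = 0` somewhere, then `w y₁'` vanishes on `[x,1)`, so the analytic function `y₁'` vanishes
on `(0,1)`, contradicting `y₁(0) < y₁(1)` by the mean value theorem.
-/

open Set Filter Topology

def kineticTerm (n a b c d : ℝ) : ℝ :=
  n * a ^ 2 + ((n - 1) * b - c - d) ^ 2 + (-b + (n - 1) * c - d) ^ 2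
    + (-b - c + (n - 1) * d) ^ 2 + (n - 3) * (b + c + d) ^ 2

lemma kineticTerm_nonneg {n : ℝ} (hn : 3 ≤ n) (a b c d : ℝ) : 0 ≤ kineticTerm n a b c d := by
  unfold kineticTerm
  have : 0 ≤ n - 3 := by linarith
  positivity

noncomputable def weight (x : ℝ) : ℝ := (1 - x ^ 2) ^ 2 / x

lemma weight_pos {x : ℝ} (hx : x ∈ Ioo (0 : ℝ) 1) : 0 < weight x := by
  have : 0 < 1 - x ^ 2 := by nlinarith [hx.1, hx.2]
  exact div_pos (by positivity) hx.1

lemma hasDerivAt_weight {x : ℝ} (hx : x ≠ 0) :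
    HasDerivAt weight (-(x⁻¹ * (1 + 3 * x ^ 2) * (1 - x ^ 2)⁻¹ * weight x)) x := by
  have h : HasDerivAt weight _ x :=
    (((hasDerivAt_pow 2 x).const_sub 1).pow 2).div (hasDerivAt_id x) hx
  refine h.congr_deriv ?_
  simp only [weight, Pi.pow_apply]
  field_simp
  ring

lemma tendsto_weight_one : Tendsto weight (𝓝 1) (𝓝 0) := by
  have : ContinuousAt weight 1 := by unfold weight; fun_prop (disch := norm_num)
  simpa [weight] using this.tendsto

lemma hasDerivAt_mul_of_integratingFactor {w u : ℝ → ℝ} {p q x : ℝ}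
    (hw : HasDerivAt w (-(p * w x)) x) (hu : HasDerivAt u (p * u x - q) x) :
    HasDerivAt (fun t => w t * u t) (-(w x * q)) x :=
  (hw.mul hu).congr_deriv (by ring)

lemma antitoneOn_weight_mul {u q : ℝ → ℝ}
    (hu : ∀ x ∈ Ioo (0 : ℝ) 1,
      HasDerivAt u (x⁻¹ * (1 + 3 * x ^ 2) * (1 - x ^ 2)⁻¹ * u x - q x) x)
    (hq : ∀ x ∈ Ioo (0 : ℝ) 1, 0 ≤ q x) :
    AntitoneOn (fun x => weight x * u x) (Ioo 0 1) := by
  have hderiv : ∀ x ∈ Ioo (0 : ℝ) 1,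
      HasDerivAt (fun x => weight x * u x) (-(weight x * q x)) x := fun x hx =>
    hasDerivAt_mul_of_integratingFactor (hasDerivAt_weight hx.1.ne') (hu x hx)
  refine antitoneOn_of_hasDerivWithinAt_nonpos (f' := fun x => -(weight x * q x)) (convex_Ioo 0 1)
    (fun x hx => (hderiv x hx).continuousAt.continuousWithinAt) ?_ ?_
  · intro x hx
    rw [interior_Ioo] at hx ⊢
    exact (hderiv x hx).hasDerivWithinAt
  · intro x hx
    rw [interior_Ioo] at hx
    exact neg_nonpos.2 (mul_nonneg (weight_pos hx).le (hq x hx))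

lemma tendsto_deriv_nhdsLT_of_contDiffOn_Icc {f : ℝ → ℝ} {a b : ℝ} {n : WithTop ℕ∞}
    (hab : a < b) (hf : ContDiffOn ℝ n f (Icc a b)) (hn : 1 ≤ n) :
    Tendsto (deriv f) (𝓝[<] b) (𝓝 (derivWithin f (Icc a b) b)) := by
  have hcont : Tendsto (derivWithin f (Icc a b)) (𝓝[<] b) (𝓝 (derivWithin f (Icc a b) b)) :=
    ((hf.continuousOn_derivWithin (uniqueDiffOn_Icc hab) hn) b
      (right_mem_Icc.2 hab.le)).mono_left (nhdsWithin_le_of_mem (Icc_mem_nhdsLT hab))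
  refine hcont.congr' ?_
  filter_upwards [Ioo_mem_nhdsLT hab] with x hx
  exact derivWithin_of_mem_nhds (Icc_mem_nhds hx.1 hx.2)

lemma AntitoneOn.nonneg_of_tendsto_nhdsLT {g : ℝ → ℝ} {a b : ℝ} (hg : AntitoneOn g (Ioo a b))
    (hlim : Tendsto g (𝓝[<] b) (𝓝 0)) : ∀ x ∈ Ioo a b, 0 ≤ g x := by
  intro x hx
  refine le_of_tendsto hlim ?_
  filter_upwards [Ioo_mem_nhdsLT hx.2] with y hy
  exact hg hx ⟨hx.1.trans hy.1, hy.2⟩ hy.1.le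

lemma eqOn_zero_of_antitoneOn_mul {w u : ℝ → ℝ} {a b x : ℝ}
    (hw : ∀ y ∈ Ioo a b, 0 < w y) (hanti : AntitoneOn (fun y => w y * u y) (Ioo a b))
    (hnonneg : ∀ y ∈ Ioo a b, 0 ≤ w y * u y) (hx : x ∈ Ioo a b) (hux : u x ≤ 0) :
    EqOn u 0 (Ioo x b) := by
  intro y hxy
  have hy : y ∈ Ioo a b := ⟨hx.1.trans hxy.1, hxy.2⟩
  have hwx : w x * u x ≤ 0 := mul_nonpos_of_nonneg_of_nonpos (hw x hx).le hux
  have hwy : w y * u y = 0 := le_antisymm ((hanti hx hy hxy.1.le).trans hwx) (hnonneg y hy)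
  exact (mul_eq_zero.1 hwy).resolve_left (hw y hy).ne'

lemma AnalyticOnNhd.eqOn_zero_of_eqOn_zero_Ioo {E : Type*} [NormedAddCommGroup E]
    [NormedSpace ℝ E] {f : ℝ → E} {a b c : ℝ} (hf : AnalyticOnNhd ℝ f (Ioo a b))
    (hc : c ∈ Ioo a b) (h0 : EqOn f 0 (Ioo c b)) : EqOn f 0 (Ioo a b) := by
  have hmid : (c + b) / 2 ∈ Ioo c b := ⟨by linarith [hc.2], by linarith [hc.2]⟩
  exact hf.eqOn_zero_of_preconnected_of_eventuallyEq_zero isPreconnected_Ioo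
    ⟨hc.1.trans hmid.1, hmid.2⟩ (h0.eventuallyEq_of_mem (isOpen_Ioo.mem_nhds hmid))

theorem stmt_0_general (n : ℕ) (hn : 7 ≤ n) (y₁ y₂ y₃ y₄ : ℝ → ℝ)
    (hC2 : ∀ i ∈ [y₁, y₂, y₃, y₄], ContDiffOn ℝ 2 i (Icc (0:ℝ) 1))
    (hODE : ∀ x ∈ Ioo (0:ℝ) 1,
      deriv (deriv y₁) x - x⁻¹ * (1 + 3*x^2) * (1 - x^2)⁻¹ * deriv y₁ x
        + (1 / (2*(n:ℝ)^2)) *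
          ((n:ℝ) * (deriv y₁ x)^2
            + (((n:ℝ)-1) * deriv y₂ x - deriv y₃ x - deriv y₄ x)^2
            + (-(deriv y₂ x) + ((n:ℝ)-1) * deriv y₃ x - deriv y₄ x)^2
            + (-(deriv y₂ x) - deriv y₃ x + ((n:ℝ)-1) * deriv y₄ x)^2
            + ((n:ℝ)-3) * (deriv y₂ x + deriv y₃ x + deriv y₄ x)^2) = 0)
    (han : AnalyticOn ℝ y₁ (Ioo (0:ℝ) 1))
    (hlt : y₁ 0 < y₁ 1) :
    ∀ x ∈ Ioo (0:ℝ) 1, 0 < deriv y₁ x := by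
  have hy₁ : AnalyticOnNhd ℝ y₁ (Ioo 0 1) := isOpen_Ioo.analyticOn_iff_analyticOnNhd.1 han
  have hy₁C2 : ContDiffOn ℝ 2 y₁ (Icc 0 1) := hC2 y₁ (by simp)
  have hn3 : (3 : ℝ) ≤ n := by exact_mod_cast (by omega : 3 ≤ n)
  have hanti : AntitoneOn (fun x => weight x * deriv y₁ x) (Ioo 0 1) := by
    refine antitoneOn_weight_mul (q := fun x => 1 / (2 * (n:ℝ) ^ 2) *
      kineticTerm n (deriv y₁ x) (deriv y₂ x) (deriv y₃ x) (deriv y₄ x)) (fun x hx => ?_)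
      (fun x _ => mul_nonneg (by positivity) (kineticTerm_nonneg hn3 _ _ _ _))
    have hdiff := (hy₁.deriv.differentiableOn x hx).differentiableAt (isOpen_Ioo.mem_nhds hx)
    refine hdiff.hasDerivAt.congr_deriv ?_
    simp only [kineticTerm]
    linarith [hODE x hx]
  have hlim : Tendsto (fun x => weight x * deriv y₁ x) (𝓝[<] 1) (𝓝 0) := by
    simpa using (tendsto_weight_one.mono_left nhdsWithin_le_nhds).mul
      (tendsto_deriv_nhdsLT_of_contDiffOn_Icc one_pos hy₁C2 one_le_two)
  intro x hx
  by_contra! hx0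
  have hzero : EqOn (deriv y₁) 0 (Ioo 0 1) :=
    hy₁.deriv.eqOn_zero_of_eqOn_zero_Ioo hx <| eqOn_zero_of_antitoneOn_mul
      (fun _ hy => weight_pos hy) hanti (hanti.nonneg_of_tendsto_nhdsLT hlim) hx hx0
  obtain ⟨c, hc, hslope⟩ :=
    exists_deriv_eq_slope y₁ one_pos hy₁C2.continuousOn hy₁.differentiableOn
  rw [hzero hc] at hslope
  simp only [Pi.zero_apply, sub_zero, div_one] at hslope
  linarith

/-- Monotonicity of `y₁` for the Einstein ODE system. -/
theorem stmt_0 (n : ℕ) (hn : 7 ≤ n) (y₁ y₂ y₃ y₄ : ℝ → ℝ)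
    (hC2 : ∀ i ∈ [y₁, y₂, y₃, y₄], ContDiffOn ℝ 2 i (Icc (0:ℝ) 1))
    (hsm : ∀ i ∈ [y₁, y₂, y₃, y₄], ContDiffOn ℝ ⊤ i (Ioo (0:ℝ) 1))
    (hODE : ∀ x ∈ Ioo (0:ℝ) 1,
      deriv (deriv y₁) x - x⁻¹ * (1 + 3*x^2) * (1 - x^2)⁻¹ * deriv y₁ x
        + (1 / (2*(n:ℝ)^2)) *
          ((n:ℝ) * (deriv y₁ x)^2
            + (((n:ℝ)-1) * deriv y₂ x - deriv y₃ x - deriv y₄ x)^2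
            + (-(deriv y₂ x) + ((n:ℝ)-1) * deriv y₃ x - deriv y₄ x)^2
            + (-(deriv y₂ x) - deriv y₃ x + ((n:ℝ)-1) * deriv y₄ x)^2
            + ((n:ℝ)-3) * (deriv y₂ x + deriv y₃ x + deriv y₄ x)^2) = 0)
    (han : AnalyticOn ℝ y₁ (Ioo (0:ℝ) 1))
    (hb0 : deriv y₁ 0 = 0) (hb1 : deriv y₁ 1 = 0)
    (hlt : y₁ 0 < y₁ 1) :
    ∀ x ∈ Ioo (0:ℝ) 1, 0 < deriv y₁ x :=
  stmt_0_general n hn y₁ y₂ y₃ y₄ hC2 hODE han hlt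
end

section
/- Let f : (0,1] → ℝ be continuous with f(1) ≤ 0, and let y : [0,1] → ℝ be C² with y'(x₁) = 0 at some x₁ ∈ (0,1), such that (x⁻¹(1-x²)² y')' (x) = -f(x)·x⁻¹(1-x²)² for all x ∈ (x₁,1), where f ≥ 0 on (x₁,1). If y'(1) = 0 (in the sense that x⁻¹(1-x²)² y'(x) → 0 as x → 1⁻), then f ≡ 0 on [x₁,1]. -/
/-!
Put `g x = x⁻¹ (1 - x²)² y'(x)`. The equation says `g' = -f x⁻¹ (1 - x²)² ≤ 0` on `(x₁, 1)`, so `g`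
is antitone on `[x₁, 1)`; since `g` vanishes at `x₁` and tends to `0` at `1⁻`, it is identically
zero there. Hence `g' = 0`, and as the weight `x⁻¹ (1 - x²)²` is positive on `(x₁, 1)`, `f` vanishes
on `(x₁, 1)`, and on `[x₁, 1]` by continuity.
-/

open Set Filter Topology

lemma AntitoneOn.eqOn_Ico_of_tendsto_nhdsLT {g : ℝ → ℝ} {a b c : ℝ} (hg : AntitoneOn g (Ico a b))
    (ha : g a = c) (hb : Tendsto g (𝓝[<] b) (𝓝 c)) : EqOn g (fun _ => c) (Ico a b) := by
  intro x hx
  have hle : g x ≤ c := ha ▸ hg (left_mem_Ico.mpr (hx.1.trans_lt hx.2)) hx hx.1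
  have hge : c ≤ g x := by
    refine le_of_tendsto hb ?_
    filter_upwards [Ioo_mem_nhdsLT hx.2] with t ht
    exact hg hx ⟨hx.1.trans ht.1.le, ht.2⟩ ht.1.le
  exact le_antisymm hle hge

lemma deriv_eq_zero_of_deriv_nonpos_of_tendsto {g : ℝ → ℝ} {a b c : ℝ}
    (hcont : ContinuousOn g (Ico a b)) (hdiff : DifferentiableOn ℝ g (Ioo a b))
    (hderiv : ∀ x ∈ Ioo a b, deriv g x ≤ 0) (ha : g a = c) (hb : Tendsto g (𝓝[<] b) (𝓝 c)) :
    ∀ x ∈ Ioo a b, deriv g x = 0 := by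
  have hanti : AntitoneOn g (Ico a b) := by
    refine antitoneOn_of_deriv_nonpos (convex_Ico a b) hcont ?_ ?_ <;> rw [interior_Ico]
    exacts [hdiff, hderiv]
  intro x hx
  have hconst : g =ᶠ[𝓝 x] fun _ => c := by
    filter_upwards [isOpen_Ioo.mem_nhds hx] with t ht
    exact hanti.eqOn_Ico_of_tendsto_nhdsLT ha hb ⟨ht.1.le, ht.2⟩
  rw [hconst.deriv_eq, deriv_const]

lemma ContDiffOn.differentiableOn_deriv_Ioo {y : ℝ → ℝ} {a b : ℝ}
    (hy : ContDiffOn ℝ 2 y (Icc a b)) : DifferentiableOn ℝ (deriv y) (Ioo a b) :=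
  ((hy.mono Ioo_subset_Icc_self).deriv_of_isOpen isOpen_Ioo (m := 1) (by norm_num)).differentiableOn
    one_ne_zero

theorem stmt_1_general (f y : ℝ → ℝ) (x₁ : ℝ) (hx₁ : x₁ ∈ Ioo (0:ℝ) 1)
    (hfc : ContinuousOn f (Ioc (0:ℝ) 1))
    (hy : ContDiffOn ℝ 2 y (Icc (0:ℝ) 1))
    (hcrit : deriv y x₁ = 0)
    (hODE : ∀ x ∈ Ioo x₁ 1,
      deriv (fun t => t⁻¹ * (1 - t^2)^2 * deriv y t) x = -(f x) * x⁻¹ * (1 - x^2)^2)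
    (hfnn : ∀ x ∈ Ioo x₁ 1, 0 ≤ f x)
    (hb1 : Filter.Tendsto (fun x => x⁻¹ * (1 - x^2)^2 * deriv y x)
      (nhdsWithin 1 (Iio 1)) (nhds 0)) :
    ∀ x ∈ Icc x₁ 1, f x = 0 := by
  obtain ⟨hx₁0, hx₁1⟩ := hx₁
  set g : ℝ → ℝ := fun t => t⁻¹ * (1 - t^2)^2 * deriv y t
  have hpos : ∀ x ∈ Ioo x₁ 1, 0 < x⁻¹ * (1 - x^2)^2 := fun x hx => by
    have hx0 : 0 < x := hx₁0.trans hx.1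
    have : 0 < 1 - x^2 := by nlinarith [hx.2]
    positivity
  have hgdiff : DifferentiableOn ℝ g (Ico x₁ 1) := fun x hx =>
    have hx0 : 0 < x := hx₁0.trans_le hx.1
    (((differentiableAt_inv hx0.ne').mul (by fun_prop)).mul
      ((hy.differentiableOn_deriv_Ioo x ⟨hx0, hx.2⟩).differentiableAt
        (isOpen_Ioo.mem_nhds ⟨hx0, hx.2⟩))).differentiableWithinAt
  have hg'_nonpos : ∀ x ∈ Ioo x₁ 1, deriv g x ≤ 0 := fun x hx => by
    rw [hODE x hx, neg_mul, neg_mul, mul_assoc, neg_nonpos]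
    exact mul_nonneg (hfnn x hx) (hpos x hx).le
  have hg' : ∀ x ∈ Ioo x₁ 1, deriv g x = 0 :=
    deriv_eq_zero_of_deriv_nonpos_of_tendsto hgdiff.continuousOn
      (hgdiff.mono Ioo_subset_Ico_self) hg'_nonpos (by simp [g, hcrit]) hb1
  have hf0 : EqOn f 0 (Ioo x₁ 1) := fun x hx => by
    have h := hg' x hx
    rw [hODE x hx, neg_mul, neg_mul, mul_assoc, neg_eq_zero] at h
    exact (mul_eq_zero.mp h).resolve_right (hpos x hx).ne'
  exact fun x hx => hf0.of_subset_closure (hfc.mono fun t ht => ⟨hx₁0.trans_le ht.1, ht.2⟩)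
    continuousOn_const Ioo_subset_Icc_self (closure_Ioo hx₁1.ne).ge hx

/-- Integration-by-parts step: the nonnegative source must vanish. -/
theorem stmt_1 (f y : ℝ → ℝ) (x₁ : ℝ) (hx₁ : x₁ ∈ Ioo (0:ℝ) 1)
    (hfc : ContinuousOn f (Ioc (0:ℝ) 1)) (hf1 : f 1 ≤ 0)
    (hy : ContDiffOn ℝ 2 y (Icc (0:ℝ) 1))
    (hcrit : deriv y x₁ = 0)
    (hODE : ∀ x ∈ Ioo x₁ 1,
      deriv (fun t => t⁻¹ * (1 - t^2)^2 * deriv y t) x = -(f x) * x⁻¹ * (1 - x^2)^2)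
    (hfnn : ∀ x ∈ Ioo x₁ 1, 0 ≤ f x)
    (hb1 : Filter.Tendsto (fun x => x⁻¹ * (1 - x^2)^2 * deriv y x)
      (nhdsWithin 1 (Iio 1)) (nhds 0)) :
    ∀ x ∈ Icc x₁ 1, f x = 0 :=
  stmt_1_general f y x₁ hx₁ hfc hy hcrit hODE hfnn hb1
end

section
/- Let n ≥ 7. For t₂ > 0 define t₁*(t₂) = ((n+5)t₂² - 4t₂³)/((n-1)t₂² + 2). Then t₁*(t₂) ≤ 1 for all t₂ ∈ (0, (n+5)/4], with equality if and only if t₂ = 1. Moreover, if t₂ ∈ (2/(n+3), 1) then t₂ < t₁*(t₂) < 1, and if t₂ > 1 then t₁*(t₂) < 1. -/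
open Set

/-- Algebraic properties of the auxiliary function
`t₁*(t₂) = ((n+5)t₂² - 4t₂³)/((n-1)t₂² + 2)`. -/
theorem stmt_4 (n : ℕ) (hn : 7 ≤ n) :
    (∀ t₂ : ℝ, t₂ ∈ Ioc (0:ℝ) (((n:ℝ)+5)/4) →
      (((n:ℝ)+5)*t₂^2 - 4*t₂^3)/(((n:ℝ)-1)*t₂^2 + 2) ≤ 1 ∧
      ((((n:ℝ)+5)*t₂^2 - 4*t₂^3)/(((n:ℝ)-1)*t₂^2 + 2) = 1 ↔ t₂ = 1)) ∧
    (∀ t₂ : ℝ, t₂ ∈ Ioo (2/((n:ℝ)+3)) 1 →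
      t₂ < (((n:ℝ)+5)*t₂^2 - 4*t₂^3)/(((n:ℝ)-1)*t₂^2 + 2) ∧
      (((n:ℝ)+5)*t₂^2 - 4*t₂^3)/(((n:ℝ)-1)*t₂^2 + 2) < 1) ∧
    (∀ t₂ : ℝ, 1 < t₂ →
      (((n:ℝ)+5)*t₂^2 - 4*t₂^3)/(((n:ℝ)-1)*t₂^2 + 2) < 1) := by
  have hn' : (7:ℝ) ≤ (n:ℝ) := by exact_mod_cast hn
  have hD : ∀ t : ℝ, 0 < ((n:ℝ)-1)*t^2 + 2 := by
    intro t; nlinarith [sq_nonneg t]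
  refine ⟨?_, ?_, ?_⟩
  · rintro t ⟨ht0, -⟩
    constructor
    · rw [div_le_one (hD t)]
      nlinarith [sq_nonneg (t-1), mul_nonneg (sq_nonneg (t-1)) ht0.le]
    · rw [div_eq_one_iff_eq (hD t).ne']
      constructor
      · intro h
        have h2 : 2*(t-1)^2*(2*t+1) = 0 := by nlinarith
        have h3 : (2:ℝ)*t+1 > 0 := by linarith
        have : (t-1)^2 = 0 := by
          rcases mul_eq_zero.1 h2 with h4 | h4
          · rcases mul_eq_zero.1 h4 with h5 | h5
            · norm_num at h5
            · exact h5
          · linarith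
        have := pow_eq_zero_iff (n := 2) (by norm_num) |>.1 this
        linarith
      · intro h; subst h; ring
  · rintro t ⟨ht1, ht2⟩
    have ht0 : 0 < t := lt_trans (by positivity) ht1
    have htl : 2 < ((n:ℝ)+3)*t := by
      have h3 : (0:ℝ) < (n:ℝ)+3 := by linarith
      rw [div_lt_iff₀ h3] at ht1; linarith
    constructor
    · rw [lt_div_iff₀ (hD t)]
      nlinarith [mul_pos (sub_pos.2 htl) (sub_pos.2 ht2), mul_pos ht0 (mul_pos (sub_pos.2 htl) (sub_pos.2 ht2))]
    · rw [div_lt_one (hD t)]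
      nlinarith [mul_pos (mul_pos two_pos (pow_pos (sub_pos.2 ht2) 2)) (by linarith : (0:ℝ) < 2*t+1), sq_nonneg (t-1)]
  · intro t ht
    rw [div_lt_one (hD t)]
    nlinarith [mul_pos (mul_pos two_pos (pow_pos (by linarith : (0:ℝ) < t-1) 2)) (by linarith : (0:ℝ) < 2*t+1)]
end

section
/- Let n ≥ 7. Suppose positive reals t₁, t₂, t₃ and K ∈ (0,1] satisfy n(n-1) ≥ (t₁t₂t₃)^{1/n}·[(n-3)(n+5) - (n-3)(t₁+t₂+t₃) + 2(2t₁t₂+2t₁t₃+2t₂t₃ - t₁² - t₂² - t₃²)/(t₁t₂t₃)]. Assume additionally t₁ ≥ t₂ ≥ t₃, the bounds t₃/t₂ ≥ σ₁ > 0 and t₂/t₁ ≥ σ₂ > 0 for fixed constants σ₁, σ₂, the upper bound t₁ ≤ M for a fixed constant M with t₁+t₂+t₃ < n+5, and that 2t₁t₂+2t₁t₃+2t₂t₃-t₁²-t₂²-t₃² ≥ τ·t₃² for a fixed τ > 0. Then there exists δ > 0, depending only on n, σ₁, σ₂, M, τ, such that t₃ > δ (hence t_i > δ for i = 1,2,3).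 -/
/-- Uniform lower bound for `t₃` from the Yamabe-type inequality. -/
theorem stmt_5 (n : ℕ) (hn : 7 ≤ n) (σ₁ σ₂ M τ : ℝ)
    (hσ₁ : 0 < σ₁) (hσ₂ : 0 < σ₂) (hM : 0 < M) (hτ : 0 < τ) :
    ∃ δ > 0, ∀ t₁ t₂ t₃ K : ℝ,
      0 < t₁ → 0 < t₂ → 0 < t₃ → 0 < K → K ≤ 1 →
      (n:ℝ)*((n:ℝ)-1) ≥ (t₁*t₂*t₃) ^ ((1:ℝ)/(n:ℝ)) *
        (((n:ℝ)-3)*((n:ℝ)+5) - ((n:ℝ)-3)*(t₁+t₂+t₃)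
          + 2*(2*t₁*t₂ + 2*t₁*t₃ + 2*t₂*t₃ - t₁^2 - t₂^2 - t₃^2)/(t₁*t₂*t₃)) →
      t₃ ≤ t₂ → t₂ ≤ t₁ →
      σ₁ ≤ t₃/t₂ → σ₂ ≤ t₂/t₁ →
      t₁ ≤ M → t₁ + t₂ + t₃ < (n:ℝ)+5 →
      τ * t₃^2 ≤ 2*t₁*t₂ + 2*t₁*t₃ + 2*t₂*t₃ - t₁^2 - t₂^2 - t₃^2 →
      δ < t₃ := by
  have hn7 : (7:ℝ) ≤ (n:ℝ) := by exact_mod_cast hn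
  have hσ : (0:ℝ) < σ₁^2 * σ₂ := by positivity
  set C : ℝ := max 1 (1/(σ₁^2*σ₂)) with hCdef
  have hC1 : (1:ℝ) ≤ C := le_max_left _ _
  have hC0 : (0:ℝ) < C := lt_of_lt_of_le one_pos hC1
  have hN : (0:ℝ) < (n:ℝ)*((n:ℝ)-1) := by nlinarith
  set B : ℝ := (2*τ)^7/(C^6 * ((n:ℝ)*((n:ℝ)-1))^7) with hBdef
  have hB0 : (0:ℝ) < B := by positivity
  refine ⟨min (1/C) (min B 1 / 2), by positivity, ?_⟩
  intro t₁ t₂ t₃ K h1 h2 h3 hK0 hK1 hmain h32 h21 hs1 hs2 hM1 hsum hQ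
  by_contra hcon
  push_neg at hcon
  set δ : ℝ := min (1/C) (min B 1 / 2) with hδdef
  have hδ1C : δ ≤ 1/C := min_le_left _ _
  have hδB : δ ≤ min B 1 / 2 := min_le_right _ _
  have hδ1 : δ ≤ 1 := by
    have : min B 1 ≤ 1 := min_le_right _ _
    linarith
  have hδ0 : (0:ℝ) < δ := by positivity
  -- basic bounds
  have hb2 : σ₁ * t₂ ≤ t₃ := (le_div_iff₀ h2).mp hs1
  have hb1 : σ₂ * t₁ ≤ t₂ := (le_div_iff₀ h1).mp hs2
  set P : ℝ := t₁*t₂*t₃ with hPdef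
  have hP0 : (0:ℝ) < P := by positivity
  have hkey : σ₁^2*σ₂*P ≤ t₃^3 := by
    have h12 : σ₁*σ₂*t₁ ≤ t₃ := by
      calc σ₁*σ₂*t₁ = σ₁*(σ₂*t₁) := by ring
        _ ≤ σ₁*t₂ := mul_le_mul_of_nonneg_left hb1 hσ₁.le
        _ ≤ t₃ := hb2
    have hA : (σ₁*σ₂*t₁)*(σ₁*t₂) ≤ t₃*t₃ := mul_le_mul h12 hb2 (by positivity) h3.le
    calc σ₁^2*σ₂*P = (σ₁*σ₂*t₁)*(σ₁*t₂)*t₃ := by ring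
      _ ≤ t₃*t₃*t₃ := mul_le_mul_of_nonneg_right hA h3.le
      _ = t₃^3 := by ring
  have hPC : P ≤ C * t₃^3 := by
    have hσC : 1/(σ₁^2*σ₂) ≤ C := le_max_right _ _
    have h1' : P ≤ (1/(σ₁^2*σ₂)) * t₃^3 := by
      rw [div_mul_eq_mul_div, le_div_iff₀ hσ]
      calc P * (σ₁^2*σ₂) = σ₁^2*σ₂*P := by ring
        _ ≤ t₃^3 := hkey
        _ = 1*t₃^3 := by ring
    have ht3 : (0:ℝ) ≤ t₃^3 := by positivity
    exact h1'.trans (mul_le_mul_of_nonneg_right hσC ht3)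
  -- split on P ≤ 1
  rcases le_or_gt P 1 with hP1 | hP1
  · -- main case, use the Yamabe inequality
    have hrpow0 : (0:ℝ) ≤ P ^ ((1:ℝ)/(n:ℝ)) := Real.rpow_nonneg hP0.le _
    have hbr : 2*(τ*t₃^2)/P ≤ ((n:ℝ)-3)*((n:ℝ)+5) - ((n:ℝ)-3)*(t₁+t₂+t₃)
          + 2*(2*t₁*t₂ + 2*t₁*t₃ + 2*t₂*t₃ - t₁^2 - t₂^2 - t₃^2)/P := by
      have hQ' : 2*(τ*t₃^2)/P ≤ 2*(2*t₁*t₂ + 2*t₁*t₃ + 2*t₂*t₃ - t₁^2 - t₂^2 - t₃^2)/P := by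
        gcongr
      have hpos : 0 ≤ ((n:ℝ)-3)*(((n:ℝ)+5)-(t₁+t₂+t₃)) :=
        mul_nonneg (by linarith) (by linarith)
      nlinarith [hpos]
    have main2 : P ^ ((1:ℝ)/(n:ℝ)) * (2*(τ*t₃^2)/P) ≤ (n:ℝ)*((n:ℝ)-1) :=
      le_trans (mul_le_mul_of_nonneg_left hbr hrpow0) hmain
    have h1n7 : (1:ℝ)/(n:ℝ) ≤ 1/7 := by
      apply one_div_le_one_div_of_le (by norm_num) hn7
    have hpow : P ^ ((1:ℝ)/7) ≤ P ^ ((1:ℝ)/(n:ℝ)) :=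
      Real.rpow_le_rpow_of_exponent_ge hP0 hP1 h1n7
    have main3 : P ^ ((1:ℝ)/7) * (2*(τ*t₃^2)/P) ≤ (n:ℝ)*((n:ℝ)-1) :=
      le_trans (mul_le_mul_of_nonneg_right hpow (by positivity)) main2
    have hpow7 : (P ^ ((1:ℝ)/7))^(7:ℕ) = P := by
      rw [← Real.rpow_natCast (P ^ ((1:ℝ)/7)) 7, ← Real.rpow_mul hP0.le]
      norm_num
    have h7 : (P ^ ((1:ℝ)/7) * (2*(τ*t₃^2)/P))^(7:ℕ) ≤ ((n:ℝ)*((n:ℝ)-1))^(7:ℕ) :=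
      pow_le_pow_left₀ (by positivity) main3 7
    rw [mul_pow, hpow7, div_pow] at h7
    have hP6 : (0:ℝ) < P^6 := by positivity
    have h9 : P * ((2*(τ*t₃^2))^(7:ℕ) / P^(7:ℕ)) = (2*τ)^7 * t₃^14 / P^6 := by
      field_simp
    rw [h9, div_le_iff₀ hP6] at h7
    have hP6b : P^6 ≤ C^6 * t₃^18 := by
      calc P^6 ≤ (C*t₃^3)^6 := pow_le_pow_left₀ hP0.le hPC 6
        _ = C^6 * t₃^18 := by ring
    have h10 : (2*τ)^7 * t₃^14 ≤ (((n:ℝ)*((n:ℝ)-1))^7 * C^6 * t₃^4) * t₃^14 := by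
      calc (2*τ)^7 * t₃^14 ≤ ((n:ℝ)*((n:ℝ)-1))^7 * P^6 := h7
        _ ≤ ((n:ℝ)*((n:ℝ)-1))^7 * (C^6 * t₃^18) := by
            apply mul_le_mul_of_nonneg_left hP6b (by positivity)
        _ = (((n:ℝ)*((n:ℝ)-1))^7 * C^6 * t₃^4) * t₃^14 := by ring
    have h11 : (2*τ)^7 ≤ ((n:ℝ)*((n:ℝ)-1))^7 * C^6 * t₃^4 :=
      le_of_mul_le_mul_right h10 (pow_pos h3 14)
    have hBt : B ≤ t₃^4 := by
      rw [hBdef, div_le_iff₀ (by positivity)]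
      calc (2*τ)^7 ≤ ((n:ℝ)*((n:ℝ)-1))^7 * C^6 * t₃^4 := h11
        _ = t₃^4 * (C^6 * ((n:ℝ)*((n:ℝ)-1))^7) := by ring
    have ht3δ : t₃ ≤ δ := hcon
    have ht31 : t₃ ≤ 1 := le_trans ht3δ hδ1
    have h34 : t₃^4 ≤ t₃ := pow_le_of_le_one h3.le ht31 (by norm_num)
    have : min B 1 ≤ B := min_le_left _ _
    linarith
  · -- P > 1 contradicts t₃ ≤ δ ≤ 1/C
    have ht3δ : t₃ ≤ δ := hcon
    have h3d : t₃^3 ≤ δ^3 := pow_le_pow_left₀ h3.le ht3δ 3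
    have hδ3 : δ^3 ≤ δ := pow_le_of_le_one hδ0.le hδ1 (by norm_num)
    have hCδ : C * δ ≤ 1 := (le_div_iff₀' hC0).mp hδ1C
    have : P ≤ 1 := by
      calc P ≤ C * t₃^3 := hPC
        _ ≤ C * δ^3 := mul_le_mul_of_nonneg_left h3d hC0.le
        _ ≤ C * δ := mul_le_mul_of_nonneg_left hδ3 hC0.le
        _ ≤ 1 := hCδ
    exact absurd this (not_le.mpr hP1)
end

section
/- Let n ≥ 7 and consider continuous functions t₁,t₂,t₃ : [0,1] → (0,∞) with t₃/t₂ and t₂/t₁ nondecreasing in x, t₃(x)/t₂(x) ≤ 1, t₂(x)/t₁(x) ≤ 1 for all x, and t_i(1) = 1. Suppose x₀ ∈ (0,1) is a local maximum of t₁ at which (n-1)t₁ + 2t₂ + 2t₃ - (n+5) + 2(t₁² - (t₂-t₃)²)/(t₁t₂t₃) ≤ 0 holds at x₀. Then t₁(x₀) ≤ (n+5)/(n-1 + 4t₃(0)/t₁(0)). Consequently t_i(x) ≤ max{1, t₁(0), (n+5)/(n-1+4t₃(0)/t₁(0))} for all x ∈ [0,1] and i = 1,2,3, provided t₁ ≥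 t₂ ≥ t₃ pointwise and the above critical-point inequality holds at every interior local maximum of t₁. -/
open Set

/-- Upper bound at an interior local maximum of `t₁`, and the consequent
global upper bound (estimate (3.9) of the paper). -/
theorem stmt_16 (n : ℕ) (hn : 7 ≤ n) (t₁ t₂ t₃ : ℝ → ℝ)
    (hc₁ : ContinuousOn t₁ (Icc (0:ℝ) 1)) (hc₂ : ContinuousOn t₂ (Icc (0:ℝ) 1))
    (hc₃ : ContinuousOn t₃ (Icc (0:ℝ) 1))
    (hpos₁ : ∀ x ∈ Icc (0:ℝ) 1, 0 < t₁ x)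
    (hpos₂ : ∀ x ∈ Icc (0:ℝ) 1, 0 < t₂ x)
    (hpos₃ : ∀ x ∈ Icc (0:ℝ) 1, 0 < t₃ x)
    (hr32 : MonotoneOn (fun x => t₃ x / t₂ x) (Icc (0:ℝ) 1))
    (hr21 : MonotoneOn (fun x => t₂ x / t₁ x) (Icc (0:ℝ) 1))
    (h32le : ∀ x ∈ Icc (0:ℝ) 1, t₃ x / t₂ x ≤ 1)
    (h21le : ∀ x ∈ Icc (0:ℝ) 1, t₂ x / t₁ x ≤ 1)
    (hend : t₁ 1 = 1 ∧ t₂ 1 = 1 ∧ t₃ 1 = 1) :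
    (∀ x₀ ∈ Ioo (0:ℝ) 1, IsLocalMax t₁ x₀ →
      ((n:ℝ)-1)*t₁ x₀ + 2*t₂ x₀ + 2*t₃ x₀ - ((n:ℝ)+5)
        + 2*((t₁ x₀)^2 - (t₂ x₀ - t₃ x₀)^2)/(t₁ x₀ * t₂ x₀ * t₃ x₀) ≤ 0 →
      t₁ x₀ ≤ ((n:ℝ)+5)/((n:ℝ)-1 + 4*(t₃ 0)/(t₁ 0))) ∧
    ((∀ x ∈ Icc (0:ℝ) 1, t₃ x ≤ t₂ x ∧ t₂ x ≤ t₁ x) →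
      (∀ x₀ ∈ Ioo (0:ℝ) 1, IsLocalMax t₁ x₀ →
        ((n:ℝ)-1)*t₁ x₀ + 2*t₂ x₀ + 2*t₃ x₀ - ((n:ℝ)+5)
          + 2*((t₁ x₀)^2 - (t₂ x₀ - t₃ x₀)^2)/(t₁ x₀ * t₂ x₀ * t₃ x₀) ≤ 0) →
      ∀ x ∈ Icc (0:ℝ) 1,
        t₁ x ≤ max 1 (max (t₁ 0) (((n:ℝ)+5)/((n:ℝ)-1 + 4*(t₃ 0)/(t₁ 0)))) ∧
        t₂ x ≤ max 1 (max (t₁ 0) (((n:ℝ)+5)/((n:ℝ)-1 + 4*(t₃ 0)/(t₁ 0)))) ∧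
        t₃ x ≤ max 1 (max (t₁ 0) (((n:ℝ)+5)/((n:ℝ)-1 + 4*(t₃ 0)/(t₁ 0))))) := by

  have h0mem : (0:ℝ) ∈ Icc (0:ℝ) 1 := by norm_num
  have h1mem : (1:ℝ) ∈ Icc (0:ℝ) 1 := by norm_num
  have h10 : 0 < t₁ 0 := hpos₁ 0 h0mem
  have h20 : 0 < t₂ 0 := hpos₂ 0 h0mem
  have h30 : 0 < t₃ 0 := hpos₃ 0 h0mem
  have hn7 : (7:ℝ) ≤ (n:ℝ) := by exact_mod_cast hn
  have hd : 0 < (n:ℝ)-1 + 4*(t₃ 0)/(t₁ 0) := by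
    have : 0 < 4*(t₃ 0)/(t₁ 0) := by positivity
    linarith
  -- monotonicity of t₃/t₁
  have hr31 : MonotoneOn (fun x => t₃ x / t₁ x) (Icc (0:ℝ) 1) := by
    intro a ha b hb hab
    have e₁ : t₃ a / t₁ a = (t₃ a / t₂ a) * (t₂ a / t₁ a) := by
      rw [div_mul_div_comm, mul_comm (t₂ a) (t₁ a), mul_div_mul_right _ _ (hpos₂ a ha).ne']
    have e₂ : t₃ b / t₁ b = (t₃ b / t₂ b) * (t₂ b / t₁ b) := by
      rw [div_mul_div_comm, mul_comm (t₂ b) (t₁ b), mul_div_mul_right _ _ (hpos₂ b hb).ne']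
    simp only [e₁, e₂]
    apply mul_le_mul (hr32 ha hb hab) (hr21 ha hb hab)
    · exact div_nonneg (hpos₂ a ha).le (hpos₁ a ha).le
    · exact div_nonneg (hpos₃ b hb).le (hpos₂ b hb).le
  have key : ∀ x₀ ∈ Ioo (0:ℝ) 1, IsLocalMax t₁ x₀ →
      ((n:ℝ)-1)*t₁ x₀ + 2*t₂ x₀ + 2*t₃ x₀ - ((n:ℝ)+5)
        + 2*((t₁ x₀)^2 - (t₂ x₀ - t₃ x₀)^2)/(t₁ x₀ * t₂ x₀ * t₃ x₀) ≤ 0 →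
      t₁ x₀ ≤ ((n:ℝ)+5)/((n:ℝ)-1 + 4*(t₃ 0)/(t₁ 0)) := by
    intro x₀ hx₀ _hlm h
    have hx : x₀ ∈ Icc (0:ℝ) 1 := ⟨hx₀.1.le, hx₀.2.le⟩
    have p1 := hpos₁ x₀ hx
    have p2 := hpos₂ x₀ hx
    have p3 := hpos₃ x₀ hx
    have hc31 : t₃ 0 / t₁ 0 ≤ t₃ x₀ / t₁ x₀ := hr31 h0mem hx hx₀.1.le
    have hc21 : t₂ 0 / t₁ 0 ≤ t₂ x₀ / t₁ x₀ := hr21 h0mem hx hx₀.1.le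
    have h320 : t₃ 0 ≤ t₂ 0 := (div_le_one h20).mp (h32le 0 h0mem)
    have hc32' : t₃ 0 / t₁ 0 ≤ t₂ 0 / t₁ 0 := by gcongr
    have h32 : t₃ x₀ ≤ t₂ x₀ := (div_le_one p2).mp (h32le x₀ hx)
    have h21 : t₂ x₀ ≤ t₁ x₀ := (div_le_one p1).mp (h21le x₀ hx)
    have hnum : 0 ≤ (t₁ x₀)^2 - (t₂ x₀ - t₃ x₀)^2 := by nlinarith
    have hfrac : 0 ≤ 2*((t₁ x₀)^2 - (t₂ x₀ - t₃ x₀)^2)/(t₁ x₀ * t₂ x₀ * t₃ x₀) := by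
      apply div_nonneg (by linarith) (by positivity)
    have hlin : ((n:ℝ)-1)*t₁ x₀ + 2*t₂ x₀ + 2*t₃ x₀ - ((n:ℝ)+5) ≤ 0 := by linarith
    have e1 : t₁ x₀ * (t₃ 0 / t₁ 0) ≤ t₃ x₀ := by
      have := mul_le_mul_of_nonneg_left hc31 p1.le
      have e : t₁ x₀ * (t₃ x₀ / t₁ x₀) = t₃ x₀ := by field_simp
      linarith [this, e.le, e.ge]
    have e2 : t₁ x₀ * (t₃ 0 / t₁ 0) ≤ t₂ x₀ := by
      have := mul_le_mul_of_nonneg_left (le_trans hc32' hc21) p1.le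
      have e : t₁ x₀ * (t₂ x₀ / t₁ x₀) = t₂ x₀ := by field_simp
      linarith [this, e.le, e.ge]
    rw [le_div_iff₀ hd]
    have expand : t₁ x₀ * ((n:ℝ)-1 + 4*(t₃ 0)/(t₁ 0))
        = ((n:ℝ)-1)*t₁ x₀ + 4*(t₁ x₀ * (t₃ 0 / t₁ 0)) := by ring
    rw [expand]
    linarith
  refine ⟨key, ?_⟩
  intro hord hcrit x hx
  obtain ⟨y, hymem, hmax⟩ := isCompact_Icc.exists_isMaxOn ⟨0, h0mem⟩ hc₁
  set M := max 1 (max (t₁ 0) (((n:ℝ)+5)/((n:ℝ)-1 + 4*(t₃ 0)/(t₁ 0)))) with hM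
  have ht1M : t₁ y ≤ M := by
    rcases eq_or_lt_of_le hymem.1 with h0 | h0
    · rw [← h0]
      exact le_max_of_le_right (le_max_left _ _)
    rcases eq_or_lt_of_le hymem.2 with h1 | h1
    · rw [h1, hend.1]
      exact le_max_left _ _
    · have hyIoo : y ∈ Ioo (0:ℝ) 1 := ⟨h0, h1⟩
      have hloc : IsLocalMax t₁ y := by
        have hnhds : Ioo (0:ℝ) 1 ∈ nhds y := isOpen_Ioo.mem_nhds hyIoo
        filter_upwards [hnhds] with z hz using hmax (Ioo_subset_Icc_self hz)
      exact le_trans (key y hyIoo hloc (hcrit y hyIoo hloc))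
        (le_max_of_le_right (le_max_right _ _))
  have hb : t₁ x ≤ M := le_trans (hmax hx) ht1M
  exact ⟨hb, le_trans (hord x hx).2 hb, le_trans (le_trans (hord x hx).1 (hord x hx).2) hb⟩
end
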